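/- arXiv:2505.22147 — 6 statements merged into one kernel-verified Lean document; each statement's English description precedes it below -/
import Mathlib

section
/- There exists a unique function V* : S → ℝ satisfying the Bellman equation V*(s) = R(s) + γ·max_{a∈A} Σ_{s'∈S} P(s,a,s')·V*(s') for all s ∈ S. -/
open Finset

/-! With the sup metric on `S → ℝ`, the Bellman operator is a `γ`-contraction: averaging against a
probability vector moves a value function by at most the sup distance, and so does a maximum over
actions. Banach's fixed point theorem on the complete space `S → ℝ` gives the unique fixed point. -/

/-- Bellman operator of a finite discounted MDP. -/
noncomputable def bellman {S A : Type*} [Fintype S] [Fintype A] [Nonempty A]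
    (R : S → ℝ) (P : S → A → S → ℝ) (γ : ℝ) (V : S → ℝ) (s : S) : ℝ :=
  R s + γ * Finset.univ.sup' Finset.univ_nonempty (fun a => ∑ s', P s a s' * V s')

section SupDifference

variable {ι α : Type*} [LinearOrder α] [AddCommGroup α] [IsOrderedAddMonoid α]
  {s : Finset ι} {f g : ι → α} {c : α}

lemma Finset.sup'_sub_sup'_le (hs : s.Nonempty) (h : ∀ i ∈ s, f i - g i ≤ c) :
    s.sup' hs f - s.sup' hs g ≤ c := by
  refine sub_le_iff_le_add.2 (sup'_le hs f fun i hi => ?_)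
  calc f i ≤ c + g i := sub_le_iff_le_add.1 (h i hi)
    _ ≤ c + s.sup' hs g := by gcongr; exact le_sup' g hi

lemma Finset.abs_sup'_sub_sup'_le (hs : s.Nonempty) (h : ∀ i ∈ s, |f i - g i| ≤ c) :
    |s.sup' hs f - s.sup' hs g| ≤ c :=
  abs_sub_le_iff.2 ⟨sup'_sub_sup'_le hs fun i hi => (abs_sub_le_iff.1 (h i hi)).1,
    sup'_sub_sup'_le hs fun i hi => (abs_sub_le_iff.1 (h i hi)).2⟩

end SupDifference

lemma abs_sum_mul_sub_sum_mul_le_dist {ι : Type*} [Fintype ι] {p : ι → ℝ}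
    (hp0 : ∀ i, 0 ≤ p i) (hp1 : ∑ i, p i = 1) (V W : ι → ℝ) :
    |∑ i, p i * V i - ∑ i, p i * W i| ≤ dist V W :=
  calc |∑ i, p i * V i - ∑ i, p i * W i|
      = |∑ i, p i * (V i - W i)| := by simp only [mul_sub, sum_sub_distrib]
    _ ≤ ∑ i, p i * |V i - W i| := by
      refine (abs_sum_le_sum_abs _ _).trans_eq (sum_congr rfl fun i _ => ?_)
      rw [abs_mul, abs_of_nonneg (hp0 i)]
    _ ≤ ∑ i, p i * dist V W := by
      gcongr with i
      · exact hp0 i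
      · exact Real.dist_eq (V i) (W i) ▸ dist_le_pi_dist V W i
    _ = dist V W := by rw [← sum_mul, hp1, one_mul]

theorem bellman_contractingWith {S A : Type*} [Fintype S] [Fintype A] [Nonempty A]
    (R : S → ℝ) (P : S → A → S → ℝ) {γ : ℝ}
    (hP0 : ∀ s a s', 0 ≤ P s a s') (hP1 : ∀ s a, ∑ s', P s a s' = 1)
    (hγ0 : 0 ≤ γ) (hγ1 : γ < 1) :
    ContractingWith ⟨γ, hγ0⟩ (bellman R P γ) := by
  refine ⟨by exact_mod_cast hγ1, LipschitzWith.of_dist_le_mul fun V W => ?_⟩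
  refine (dist_pi_le_iff (by positivity)).2 fun s => ?_
  have hsup := abs_sup'_sub_sup'_le univ_nonempty fun a _ =>
    abs_sum_mul_sub_sum_mul_le_dist (hP0 s a) (hP1 s a) V W
  rw [Real.dist_eq, bellman, bellman, add_sub_add_left_eq_sub, ← mul_sub, abs_mul,
    abs_of_nonneg hγ0]
  exact mul_le_mul_of_nonneg_left hsup hγ0

theorem bellman_exists_unique_fixed_point_general {S A : Type*}
    [Fintype S] [Fintype A] [Nonempty A]
    (R : S → ℝ) (P : S → A → S → ℝ) (γ : ℝ)
    (hP0 : ∀ s a s', 0 ≤ P s a s') (hP1 : ∀ s a, ∑ s', P s a s' = 1)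
    (hγ0 : 0 ≤ γ) (hγ1 : γ < 1) :
    ∃! Vstar : S → ℝ, ∀ s, Vstar s = bellman R P γ Vstar s := by
  have hT := bellman_contractingWith R P hP0 hP1 hγ0 hγ1
  refine ⟨hT.fixedPoint, fun s => congrFun hT.fixedPoint_isFixedPt.symm s, fun V hV => ?_⟩
  exact hT.fixedPoint_unique (funext fun s => (hV s).symm)

/-- There is a unique function satisfying the Bellman equation. -/
theorem bellman_exists_unique_fixed_point {S A : Type*}
    [Fintype S] [Fintype A] [Nonempty S] [Nonempty A]
    (R : S → ℝ) (P : S → A → S → ℝ) (γ : ℝ)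
    (hP0 : ∀ s a s', 0 ≤ P s a s') (hP1 : ∀ s a, ∑ s', P s a s' = 1)
    (hγ0 : 0 ≤ γ) (hγ1 : γ < 1) :
    ∃! Vstar : S → ℝ, ∀ s, Vstar s = bellman R P γ Vstar s :=
  bellman_exists_unique_fixed_point_general R P γ hP0 hP1 hγ0 hγ1
end

section
/- Let α : S → ℝ satisfy α(s) > 0 for all s ∈ S. Then V* is LP-feasible, and for every LP-feasible V one has Σ_{s∈S} α(s)·V(s) ≥ Σ_{s∈S} α(s)·V*(s), with equality if and only if V = V*. Hence V* is the unique optimal solution of the linear program that minimizes Σ_{s∈S} α(s)·V(s) subject to the LP-feasibility constraints. -/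
open Finset

lemma feasible_ge_vstar {S A : Type*}
    [Fintype S] [Fintype A] [Nonempty S] [Nonempty A]
    (R : S → ℝ) (P : S → A → S → ℝ) (γ : ℝ)
    (hP0 : ∀ s a s', 0 ≤ P s a s') (hP1 : ∀ s a, ∑ s', P s a s' = 1)
    (hγ0 : 0 ≤ γ) (hγ1 : γ < 1)
    (Vstar : S → ℝ) (hVstar : ∀ s, Vstar s = bellman R P γ Vstar s)
    (V : S → ℝ) (hV : ∀ s a, V s ≥ R s + γ * ∑ s', P s a s' * V s') :
    ∀ s, Vstar s ≤ V s := by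
  set m := Finset.univ.inf' Finset.univ_nonempty (fun s => V s - Vstar s) with hm
  have key : ∀ s : S, γ * m ≤ V s - Vstar s := by
    intro s
    obtain ⟨a, -, ha⟩ := Finset.exists_mem_eq_sup' (Finset.univ_nonempty (α := A))
      (fun a => ∑ s', P s a s' * Vstar s')
    have hVs : Vstar s = R s + γ * ∑ s', P s a s' * Vstar s' := by
      rw [hVstar s, bellman, ← ha]
    have hsum : m ≤ ∑ s', P s a s' * V s' - ∑ s', P s a s' * Vstar s' := by
      rw [← Finset.sum_sub_distrib]
      calc m = ∑ s', P s a s' * m := by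
              rw [← Finset.sum_mul, hP1, one_mul]
        _ ≤ ∑ s', (P s a s' * V s' - P s a s' * Vstar s') := by
              apply Finset.sum_le_sum
              intro s' _
              rw [← mul_sub]
              exact mul_le_mul_of_nonneg_left
                (Finset.inf'_le _ (Finset.mem_univ s')) (hP0 s a s')
    have := hV s a
    rw [hVs]
    have := mul_le_mul_of_nonneg_left hsum hγ0
    nlinarith [hV s a]
  have hm0 : 0 ≤ m := by
    obtain ⟨s₀, -, hs₀⟩ := Finset.exists_mem_eq_inf' (Finset.univ_nonempty (α := S))
      (fun s => V s - Vstar s)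
    have h1 : γ * m ≤ m := by rw [hm, hs₀]; exact hs₀ ▸ key s₀
    nlinarith
  intro s
  have h2 : m ≤ V s - Vstar s := Finset.inf'_le _ (Finset.mem_univ s)
  linarith

/-- `V*` is the unique optimal solution of the exact LP formulation. -/
theorem lp_unique_optimal_solution {S A : Type*}
    [Fintype S] [Fintype A] [Nonempty S] [Nonempty A]
    (R : S → ℝ) (P : S → A → S → ℝ) (γ : ℝ)
    (hP0 : ∀ s a s', 0 ≤ P s a s') (hP1 : ∀ s a, ∑ s', P s a s' = 1)
    (hγ0 : 0 ≤ γ) (hγ1 : γ < 1)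
    (Vstar : S → ℝ) (hVstar : ∀ s, Vstar s = bellman R P γ Vstar s)
    (α : S → ℝ) (hα : ∀ s, 0 < α s) :
    (∀ s a, Vstar s ≥ R s + γ * ∑ s', P s a s' * Vstar s') ∧
      ∀ V : S → ℝ, (∀ s a, V s ≥ R s + γ * ∑ s', P s a s' * V s') →
        (∑ s, α s * V s ≥ ∑ s, α s * Vstar s) ∧
        ((∑ s, α s * V s = ∑ s, α s * Vstar s) ↔ V = Vstar) := by
  constructor
  · intro s a
    rw [hVstar s, bellman]
    have hle : (∑ s', P s a s' * Vstar s') ≤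
        Finset.univ.sup' Finset.univ_nonempty (fun a => ∑ s', P s a s' * Vstar s') :=
      Finset.le_sup' (fun a => ∑ s', P s a s' * Vstar s') (Finset.mem_univ a)
    nlinarith
  · intro V hV
    have hpt : ∀ s, Vstar s ≤ V s :=
      feasible_ge_vstar R P γ hP0 hP1 hγ0 hγ1 Vstar hVstar V hV
    have hterm : ∀ s ∈ Finset.univ, α s * Vstar s ≤ α s * V s := fun s _ =>
      mul_le_mul_of_nonneg_left (hpt s) (hα s).le
    refine ⟨Finset.sum_le_sum hterm, ?_, ?_⟩
    · intro heq
      funext s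
      have := (Finset.sum_eq_sum_iff_of_le hterm).mp heq.symm s (Finset.mem_univ s)
      exact mul_left_cancel₀ (hα s).ne' this.symm
    · rintro rfl; rfl
end

section
/- Let π : S → A be a greedy policy with respect to V*, i.e., for every s ∈ S the action π(s) attains max_{a∈A} Σ_{s'∈S} P(s,a,s')·V*(s'). Then the unique fixed point V_π of the policy Bellman operator (T_π V)(s) = R(s) + γ·Σ_{s'∈S} P(s,π(s),s')·V(s') equals V*; in particular an optimal deterministic stationary policy exists. -/
open Finset

/-- The value of a greedy policy w.r.t. `V*` equals `V*`; in particular an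
optimal deterministic stationary policy exists. -/
theorem greedy_policy_is_optimal {S A : Type*}
    [Fintype S] [Fintype A] [Nonempty S] [Nonempty A]
    (R : S → ℝ) (P : S → A → S → ℝ) (γ : ℝ)
    (hP0 : ∀ s a s', 0 ≤ P s a s') (hP1 : ∀ s a, ∑ s', P s a s' = 1)
    (hγ0 : 0 ≤ γ) (hγ1 : γ < 1)
    (Vstar : S → ℝ) (hVstar : ∀ s, Vstar s = bellman R P γ Vstar s)
    (π : S → A)
    (hπ : ∀ s, ∑ s', P s (π s) s' * Vstar s'
      = Finset.univ.sup' Finset.univ_nonempty (fun a => ∑ s', P s a s' * Vstar s')) :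
    (∀ s, Vstar s = R s + γ * ∑ s', P s (π s) s' * Vstar s') ∧
      ∀ Vπ : S → ℝ, (∀ s, Vπ s = R s + γ * ∑ s', P s (π s) s' * Vπ s') → Vπ = Vstar := by
  have hfix : ∀ s, Vstar s = R s + γ * ∑ s', P s (π s) s' * Vstar s' := by
    intro s
    rw [hVstar s, bellman, hπ s]
  refine ⟨hfix, ?_⟩
  intro Vπ hVπ
  obtain ⟨s0, -, hs0⟩ := Finset.exists_max_image (Finset.univ : Finset S)
    (fun s => |Vπ s - Vstar s|) Finset.univ_nonempty
  have hdiff : Vπ s0 - Vstar s0 = γ * ∑ s', P s0 (π s0) s' * (Vπ s' - Vstar s') := by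
    have h1 : ∑ s', P s0 (π s0) s' * (Vπ s' - Vstar s')
        = ∑ s', P s0 (π s0) s' * Vπ s' - ∑ s', P s0 (π s0) s' * Vstar s' := by
      simp [mul_sub, Finset.sum_sub_distrib]
    rw [h1, hVπ s0, hfix s0]; ring
  have key : |Vπ s0 - Vstar s0| ≤ γ * |Vπ s0 - Vstar s0| := by
    calc |Vπ s0 - Vstar s0|
        = γ * |∑ s', P s0 (π s0) s' * (Vπ s' - Vstar s')| := by
          rw [hdiff, abs_mul, abs_of_nonneg hγ0]
      _ ≤ γ * |Vπ s0 - Vstar s0| := by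
          apply mul_le_mul_of_nonneg_left ?_ hγ0
          calc |∑ s', P s0 (π s0) s' * (Vπ s' - Vstar s')|
              ≤ ∑ s', |P s0 (π s0) s' * (Vπ s' - Vstar s')| :=
                Finset.abs_sum_le_sum_abs _ _
            _ ≤ ∑ s', P s0 (π s0) s' * |Vπ s0 - Vstar s0| := by
                apply Finset.sum_le_sum
                intro s' _
                rw [abs_mul, abs_of_nonneg (hP0 _ _ _)]
                exact mul_le_mul_of_nonneg_left (hs0 s' (Finset.mem_univ s')) (hP0 _ _ _)
            _ = |Vπ s0 - Vstar s0| := by rw [← Finset.sum_mul, hP1, one_mul]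
  have hzero : |Vπ s0 - Vstar s0| ≤ 0 := by nlinarith [abs_nonneg (Vπ s0 - Vstar s0)]
  funext s
  have h1 : |Vπ s - Vstar s| ≤ 0 := le_trans (hs0 s (Finset.mem_univ s)) hzero
  have h2 : Vπ s - Vstar s = 0 := abs_eq_zero.mp (le_antisymm h1 (abs_nonneg _))
  linarith
end

section
/- Let ≈ be an equivalence relation on S such that whenever s ≈ t: R(s) = R(t), and for every action a ∈ A and every equivalence class C of ≈, Σ_{s'∈C} P(s,a,s') = Σ_{s'∈C} P(t,a,s'). Then s ≈ t implies V*(s) = V*(t); that is, the optimal value function is constant on the classes of any such lumpable (bisimulation) equivalence, so indistinguishable states can be grouped without changing optimal values. -/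
open Finset

/-- The optimal value function is constant on the classes of any lumpable
(bisimulation) equivalence relation. -/
theorem optimal_value_constant_on_bisimulation_classes {S A : Type*}
    [Fintype S] [Fintype A] [Nonempty S] [Nonempty A]
    (R : S → ℝ) (P : S → A → S → ℝ) (γ : ℝ)
    (hP0 : ∀ s a s', 0 ≤ P s a s') (hP1 : ∀ s a, ∑ s', P s a s' = 1)
    (hγ0 : 0 ≤ γ) (hγ1 : γ < 1)
    (Vstar : S → ℝ) (hVstar : ∀ s, Vstar s = bellman R P γ Vstar s)
    (r : S → S → Prop) [DecidableRel r] (hr : Equivalence r)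
    (hR : ∀ s t, r s t → R s = R t)
    (hP : ∀ s t, r s t → ∀ a, ∀ u,
      ∑ s' ∈ Finset.univ.filter (fun s' => r u s'), P s a s'
        = ∑ s' ∈ Finset.univ.filter (fun s' => r u s'), P t a s') :
    ∀ s t, r s t → Vstar s = Vstar t := by
  classical
  set sd : Setoid S := ⟨r, hr⟩ with hsd
  haveI : DecidableEq (Quotient sd) := by
    exact fun a b =>
      Quotient.recOnSubsingleton₂ a b fun x y =>
        decidable_of_iff (r x y) ⟨fun h => Quotient.sound h, fun h => Quotient.exact h⟩
  -- key: sums against class-invariant functions agree for related states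
  have key : ∀ (f : S → ℝ), (∀ x y, r x y → f x = f y) →
      ∀ s t, r s t → ∀ a, ∑ s', P s a s' * f s' = ∑ s', P t a s' * f s' := by
    intro f hf s t hst a
    rw [← Finset.sum_fiberwise Finset.univ (Quotient.mk sd) (fun s' => P s a s' * f s'),
        ← Finset.sum_fiberwise Finset.univ (Quotient.mk sd) (fun s' => P t a s' * f s')]
    refine Finset.sum_congr rfl fun q _ => ?_
    have hfil : Finset.univ.filter (fun s' => Quotient.mk sd s' = q)
        = Finset.univ.filter (fun s' => r q.out s') := by
      refine Finset.filter_congr fun x _ => ?_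
      constructor
      · intro h
        have h2 : Quotient.mk sd x = Quotient.mk sd q.out := by rw [h, Quotient.out_eq]
        exact hr.symm (Quotient.exact h2)
      · intro h
        rw [← Quotient.out_eq q]
        exact Quotient.sound (hr.symm h)
    have hconst : ∀ x ∈ Finset.univ.filter (fun s' => r q.out s'), f x = f q.out :=
      fun x hx => hf x q.out (hr.symm ((Finset.mem_filter.mp hx).2))
    rw [hfil]
    calc ∑ s' ∈ Finset.univ.filter (fun s' => r q.out s'), P s a s' * f s'
        = ∑ s' ∈ Finset.univ.filter (fun s' => r q.out s'), P s a s' * f q.out := by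
          refine Finset.sum_congr rfl fun x hx => by rw [hconst x hx]
      _ = (∑ s' ∈ Finset.univ.filter (fun s' => r q.out s'), P s a s') * f q.out := by
          rw [Finset.sum_mul]
      _ = (∑ s' ∈ Finset.univ.filter (fun s' => r q.out s'), P t a s') * f q.out := by
          exact congrArg (fun z => z * f q.out) (hP s t hst a q.out)
      _ = ∑ s' ∈ Finset.univ.filter (fun s' => r q.out s'), P t a s' * f q.out := by
          rw [Finset.sum_mul]
      _ = ∑ s' ∈ Finset.univ.filter (fun s' => r q.out s'), P t a s' * f s' := by
          refine Finset.sum_congr rfl fun x hx => by rw [hconst x hx]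
  -- the maximal gap over related pairs
  have hpairs : (Finset.univ.filter (fun p : S × S => r p.1 p.2)).Nonempty := by
    obtain ⟨s⟩ := ‹Nonempty S›
    exact ⟨(s, s), Finset.mem_filter.mpr ⟨Finset.mem_univ _, hr.refl s⟩⟩
  set D : ℝ := (Finset.univ.filter (fun p : S × S => r p.1 p.2)).sup' hpairs
      (fun p => |Vstar p.1 - Vstar p.2|) with hD
  have hD0 : 0 ≤ D := by
    obtain ⟨p, hp⟩ := hpairs
    rw [hD]
    exact le_trans (abs_nonneg _)
      (Finset.le_sup' (f := fun p : S × S => |Vstar p.1 - Vstar p.2|) hp)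
  have hDle : ∀ x y, r x y → |Vstar x - Vstar y| ≤ D := by
    intro x y hxy
    rw [hD]
    have hmem : ((x, y) : S × S) ∈ Finset.univ.filter (fun p : S × S => r p.1 p.2) :=
      Finset.mem_filter.mpr ⟨Finset.mem_univ _, hxy⟩
    exact Finset.le_sup' (f := fun p : S × S => |Vstar p.1 - Vstar p.2|) hmem
  -- the class-wise max of Vstar
  have hcls : ∀ u : S, (Finset.univ.filter (fun v => r u v)).Nonempty := fun u =>
    ⟨u, Finset.mem_filter.mpr ⟨Finset.mem_univ _, hr.refl u⟩⟩
  set F : S → ℝ := fun u => (Finset.univ.filter (fun v => r u v)).sup' (hcls u) Vstar with hF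
  have hFinv : ∀ x y, r x y → F x = F y := by
    intro x y hxy
    have : Finset.univ.filter (fun v => r x v) = Finset.univ.filter (fun v => r y v) := by
      refine Finset.filter_congr fun v _ => ?_
      exact ⟨fun h => hr.trans (hr.symm hxy) h, fun h => hr.trans hxy h⟩
    simp [hF, this]
  have hVF : ∀ u, Vstar u ≤ F u := fun u =>
    Finset.le_sup' Vstar (Finset.mem_filter.mpr ⟨Finset.mem_univ _, hr.refl u⟩)
  have hFD : ∀ u, F u ≤ Vstar u + D := by
    intro u
    refine Finset.sup'_le _ _ fun v hv => ?_
    have hrv : r u v := (Finset.mem_filter.mp hv).2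
    have := hDle v u (hr.symm hrv)
    have := abs_le.mp this
    linarith [this.1, this.2]
  -- one-sided bound
  have oneside : ∀ s t, r s t → Vstar s - Vstar t ≤ γ * D := by
    intro s t hst
    rw [hVstar s, hVstar t]
    unfold bellman
    rw [hR s t hst]
    have hsup : Finset.univ.sup' Finset.univ_nonempty (fun a => ∑ s', P s a s' * Vstar s')
        ≤ Finset.univ.sup' Finset.univ_nonempty (fun a => ∑ s', P t a s' * Vstar s') + D := by
      refine Finset.sup'_le _ _ fun a _ => ?_
      have h1 : ∑ s', P s a s' * Vstar s' ≤ ∑ s', P s a s' * F s' :=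
        Finset.sum_le_sum fun i _ => mul_le_mul_of_nonneg_left (hVF i) (hP0 s a i)
      have h2 : ∑ s', P s a s' * F s' = ∑ s', P t a s' * F s' := key F hFinv s t hst a
      have h3 : ∑ s', P t a s' * F s' ≤ ∑ s', P t a s' * (Vstar s' + D) :=
        Finset.sum_le_sum fun i _ => mul_le_mul_of_nonneg_left (hFD i) (hP0 t a i)
      have h4 : ∑ s', P t a s' * (Vstar s' + D) = (∑ s', P t a s' * Vstar s') + D := by
        simp only [mul_add, Finset.sum_add_distrib, ← Finset.sum_mul, hP1 t a, one_mul]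
      have h5 : ∑ s', P t a s' * Vstar s'
          ≤ Finset.univ.sup' Finset.univ_nonempty (fun a => ∑ s', P t a s' * Vstar s') :=
        Finset.le_sup' (fun a => ∑ s', P t a s' * Vstar s') (Finset.mem_univ a)
      linarith
    nlinarith
  -- conclude D ≤ γ D, hence D = 0
  have hDγ : D ≤ γ * D := by
    rw [hD]
    refine Finset.sup'_le _ _ fun p hp => ?_
    have hrp : r p.1 p.2 := (Finset.mem_filter.mp hp).2
    have h1 := oneside p.1 p.2 hrp
    have h2 := oneside p.2 p.1 (hr.symm hrp)
    rw [abs_sub_le_iff]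
    exact ⟨h1, by linarith⟩
  have hDzero : D = 0 := by nlinarith
  intro s t hst
  have := hDle s t hst
  rw [hDzero] at this
  have := abs_le.mp this
  linarith [this.1, this.2]
end

section
/- Let α : S → ℝ satisfy α(s) ≥ 0 for all s ∈ S. Then for every LP-feasible V : S → ℝ, Σ_{s∈S} α(s)·(V(s) − V*(s)) = Σ_{s∈S} α(s)·|V(s) − V*(s)|. Consequently, for LP-feasible V and W, Σ_{s∈S} α(s)·V(s) ≤ Σ_{s∈S} α(s)·W(s) if and only if Σ_{s∈S} α(s)·|V(s) − V*(s)| ≤ Σ_{s∈S} α(s)·|W(s) − V*(s)|; hence minimizing the LP objective over any subset of LP-feasible functions yields the best approximation of V* in the α-weighted L¹ norm over that subset. -/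
open Finset

/-- For nonnegative state-relevance weights, the LP objective of an LP-feasible
function equals the `α`-weighted `L¹` distance to `V*` (up to the constant
`∑ α·V*`); hence minimizing the objective over any subset of LP-feasible
functions yields the best `α`-weighted `L¹` approximation of `V*`. -/
theorem lp_objective_is_weighted_L1_distance {S A : Type*}
    [Fintype S] [Fintype A] [Nonempty S] [Nonempty A]
    (R : S → ℝ) (P : S → A → S → ℝ) (γ : ℝ)
    (hP0 : ∀ s a s', 0 ≤ P s a s') (hP1 : ∀ s a, ∑ s', P s a s' = 1)
    (hγ0 : 0 ≤ γ) (hγ1 : γ < 1)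
    (Vstar : S → ℝ) (hVstar : ∀ s, Vstar s = bellman R P γ Vstar s)
    (α : S → ℝ) (hα : ∀ s, 0 ≤ α s) :
    (∀ V : S → ℝ, (∀ s a, V s ≥ R s + γ * ∑ s', P s a s' * V s') →
        ∑ s, α s * (V s - Vstar s) = ∑ s, α s * |V s - Vstar s|) ∧
      ∀ V W : S → ℝ,
        (∀ s a, V s ≥ R s + γ * ∑ s', P s a s' * V s') →
        (∀ s a, W s ≥ R s + γ * ∑ s', P s a s' * W s') →
        ((∑ s, α s * V s ≤ ∑ s, α s * W s) ↔
          (∑ s, α s * |V s - Vstar s| ≤ ∑ s, α s * |W s - Vstar s|)) := by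
  have habs : ∀ V : S → ℝ, (∀ s a, V s ≥ R s + γ * ∑ s', P s a s' * V s') →
      ∑ s, α s * (V s - Vstar s) = ∑ s, α s * |V s - Vstar s| := by
    intro V hV
    apply Finset.sum_congr rfl
    intro s _
    rw [abs_of_nonneg (by linarith [feasible_ge_vstar R P γ hP0 hP1 hγ0 hγ1 Vstar hVstar V hV s])]
  refine ⟨habs, fun V W hV hW => ?_⟩
  rw [← habs V hV, ← habs W hW]
  have h1 : ∑ s, α s * (V s - Vstar s) = ∑ s, α s * V s - ∑ s, α s * Vstar s := by
    rw [← Finset.sum_sub_distrib]; congr 1; ext s; ring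
  have h2 : ∑ s, α s * (W s - Vstar s) = ∑ s, α s * W s - ∑ s, α s * Vstar s := by
    rw [← Finset.sum_sub_distrib]; congr 1; ext s; ring
  rw [h1, h2]
  constructor <;> intro h <;> linarith
end

section
/- Let K : (D → B) → (D → B) → ℝ be permutation-equivariant, i.e., K(f ∘ σ, g ∘ σ) = K(f, g) for every bijection σ : D ≃ D and all f, g : D → B. Then for all f, f' : D → B with h_f = h_{f'} and every histogram h' : B → ℕ, Σ over all g : D → B with h_g = h' of K(f, g) equals Σ over all g : D → B with h_g = h' of K(f', g). That is, the aggregated transition weights between histograms are well defined: they depend on the source assignment only through its histogram. -/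
open Finset

/-- The histogram of an assignment `f : D → B`: for each `r : B`, the number of
elements of `D` mapped to `r`. -/
def histogram {D B : Type*} [Fintype D] [DecidableEq B] (f : D → B) (r : B) : ℕ :=
  (Finset.univ.filter fun d => f d = r).card

lemma histogram_comp {D B : Type*} [Fintype D] [DecidableEq B]
    (g : D → B) (σ : D ≃ D) : histogram (g ∘ σ) = histogram g := by
  funext r
  unfold histogram
  apply Finset.card_bij (fun d _ => σ d)
  · intro a ha; simp_all
  · intro a _ b _ h; exact σ.injective h
  · intro b hb
    exact ⟨σ.symm b, by simp_all, by simp⟩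

lemma exists_perm {D B : Type*} [Fintype D] [DecidableEq D] [DecidableEq B]
    (f f' : D → B) (hff' : histogram f = histogram f') :
    ∃ σ : D ≃ D, f' ∘ σ = f := by
  have hcard : ∀ r : B, Fintype.card {d // f d = r} = Fintype.card {d // f' d = r} := by
    intro r
    have := congrFun hff' r
    unfold histogram at this
    simpa [Fintype.card_subtype] using this
  let e : ∀ r : B, {d // f d = r} ≃ {d // f' d = r} :=
    fun r => Fintype.equivOfCardEq (hcard r)
  let σ : D ≃ D :=
    (Equiv.sigmaFiberEquiv f).symm.trans
      ((Equiv.sigmaCongrRight e).trans (Equiv.sigmaFiberEquiv f'))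
  refine ⟨σ, funext fun d => ?_⟩
  show f' (σ d) = f d
  simp only [σ, Equiv.trans_apply, Equiv.sigmaFiberEquiv]
  exact (e (f d) ⟨d, rfl⟩).2

/-- For a permutation-equivariant kernel `K`, the aggregated transition weight
from an assignment into a histogram fiber depends on the source assignment only
through its histogram. -/
theorem aggregated_transition_weight_well_defined {D B : Type*}
    [Fintype D] [DecidableEq D] [Fintype B] [DecidableEq B]
    (K : (D → B) → (D → B) → ℝ)
    (hK : ∀ (σ : D ≃ D) (f g : D → B), K (f ∘ σ) (g ∘ σ) = K f g)
    (f f' : D → B) (hff' : histogram f = histogram f')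
    (h' : B → ℕ) :
    ∑ g ∈ Finset.univ.filter (fun g : D → B => histogram g = h'), K f g
      = ∑ g ∈ Finset.univ.filter (fun g : D → B => histogram g = h'), K f' g := by
  obtain ⟨σ, hσ⟩ := exists_perm f f' hff'
  apply Finset.sum_nbij' (fun g => g ∘ σ.symm) (fun g => g ∘ σ)
  · intro g hg
    simp only [Finset.mem_filter, Finset.mem_univ, true_and] at hg ⊢
    rw [histogram_comp, hg]
  · intro g hg
    simp only [Finset.mem_filter, Finset.mem_univ, true_and] at hg ⊢
    rw [histogram_comp, hg]
  · intro g _; funext d; simp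
  · intro g _; funext d; simp
  · intro g _
    rw [← hσ, ← hK σ f' (g ∘ σ.symm)]
    congr 1
    funext d; simp
end
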